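/- arXiv:math/0209271 — 2 statements merged into one kernel-verified Lean document; each statement's English description precedes it below -/
import Mathlib

section
/- Let α₁, α₂, α₃ ∈ ℤ define the elliptic curve E : Y² + α₃Y = X³ + α₁X² + α₂X over ℚ with discriminant Δ_E ≠ 0, and let p be a prime dividing neither Δ_E nor α₁α₂α₃. Then for every F ≥ 1, μ{(b,c) ∈ ℤ_p² : v(b) = 0, v(c) = 0, v(α₃ − c) ≥ 1, v(α₁b + α₂) ≥ 1, v(b³ + α₁b² + α₂b − c² − α₃c) ≥ F} = p^{−F−1} · #{(x,y) ∈ 𝔽_p² : α₁x + α₂ = 0, y = α₃, y² + α₃y = x³ + α₁x² + α₂x}. -/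
open MeasureTheory
open scoped ENNReal

section StmtAux

variable {p : ℕ} [hp : Fact p.Prime]

lemma aux_neZero (F : ℕ) : NeZero (p^F) := ⟨pow_ne_zero F hp.out.ne_zero⟩

lemma dvd_iff_toZModPow {F : ℕ} (hF : 1 ≤ F) (x : ℤ_[p]) :
    (p : ℤ_[p]) ∣ x ↔ (p : ZMod (p^F)) ∣ PadicInt.toZModPow F x := by
  haveI := aux_neZero (p := p) F
  constructor
  · rintro ⟨y, rfl⟩
    exact ⟨PadicInt.toZModPow F y, by simp⟩
  · rintro ⟨y, hy⟩
    have h3 : PadicInt.toZModPow F (x - (p:ℤ_[p]) * ((y.val : ℕ) : ℤ_[p])) = 0 := by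
      rw [map_sub, map_mul, map_natCast, map_natCast, ZMod.natCast_zmod_val, hy, sub_self]
    have h4 : x - (p:ℤ_[p]) * ((y.val : ℕ) : ℤ_[p]) ∈ RingHom.ker (PadicInt.toZModPow (p := p) F) := h3
    rw [PadicInt.ker_toZModPow, Ideal.mem_span_singleton] at h4
    obtain ⟨z, hz⟩ := h4
    refine ⟨(p:ℤ_[p])^(F-1) * z + ((y.val : ℕ) : ℤ_[p]), ?_⟩
    have hpF : (p:ℤ_[p])^F = p * (p:ℤ_[p])^(F-1) := by
      rw [← pow_succ']
      congr 1
      omega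
    rw [hpF] at hz
    linear_combination hz

lemma pow_dvd_iff_toZModPow (F : ℕ) (x : ℤ_[p]) :
    (p:ℤ_[p])^F ∣ x ↔ PadicInt.toZModPow F x = 0 := by
  rw [← Ideal.mem_span_singleton, ← PadicInt.ker_toZModPow, RingHom.mem_ker]

lemma dvd_iff_cast_eq_zero {F : ℕ} (hF : 1 ≤ F) (hd : p ∣ p^F) (x : ZMod (p^F)) :
    (p : ZMod (p^F)) ∣ x ↔ ZMod.castHom hd (ZMod p) x = 0 := by
  haveI := aux_neZero (p := p) F
  constructor
  · rintro ⟨y, rfl⟩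
    rw [map_mul, map_natCast, ZMod.natCast_self, zero_mul]
  · intro h0
    have h1 : ZMod.castHom hd (ZMod p) ((x.val : ℕ) : ZMod (p^F)) = ((x.val : ℕ) : ZMod p) := map_natCast _ _
    rw [ZMod.natCast_zmod_val, h0] at h1
    have h2 : p ∣ x.val := (ZMod.natCast_eq_zero_iff _ _).mp h1.symm
    obtain ⟨k, hk⟩ := h2
    exact ⟨(k : ZMod (p^F)), by rw [← ZMod.natCast_zmod_val x, hk]; push_cast; ring⟩

lemma isUnit_of_not_p_dvd {F : ℕ} {x : ZMod (p^F)} (h : ¬ (p : ZMod (p^F)) ∣ x) :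
    IsUnit x := by
  haveI := aux_neZero (p := p) F
  have hv : ¬ p ∣ x.val := by
    rintro ⟨k, hk⟩
    exact h ⟨(k : ZMod (p^F)), by rw [← ZMod.natCast_zmod_val x, hk]; push_cast; ring⟩
  rw [← ZMod.natCast_zmod_val x, ZMod.isUnit_iff_coprime]
  exact (Nat.Coprime.pow_right F ((Nat.Prime.coprime_iff_not_dvd hp.out).mpr hv).symm)

lemma hensel_count {F : ℕ} (hF : 1 ≤ F)
    (g g' : ZMod (p^F) → ZMod (p^F)) (h : ZMod (p^F) → ZMod (p^F) → ZMod (p^F))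
    (taylor : ∀ x t, g (x + t) = g x + g' x * t + t^2 * h x t)
    (c₀ : ZMod (p^F)) (h0 : (p : ZMod (p^F)) ∣ g c₀)
    (hder : ∀ x, (p : ZMod (p^F)) ∣ (x - c₀) → ¬ (p : ZMod (p^F)) ∣ g' x) :
    ∃! c, (p : ZMod (p^F)) ∣ (c - c₀) ∧ g c = 0 := by
  haveI := aux_neZero (p := p) F
  have key : ∀ k : ℕ, 1 ≤ k → ∃ c, (p : ZMod (p^F)) ∣ (c - c₀) ∧ (p : ZMod (p^F))^k ∣ g c := by
    intro k hk
    induction k with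
    | zero => omega
    | succ k ih =>
      rcases Nat.eq_or_lt_of_le hk with h1 | h1
      · exact ⟨c₀, by simp, by rw [← h1, pow_one]; exact h0⟩
      · obtain ⟨c, hc1, hc2⟩ := ih (by omega)
        have hu : IsUnit (g' c) := isUnit_of_not_p_dvd (hder c hc1)
        set w : ZMod (p^F) := ↑hu.unit⁻¹ with hw
        have hw1 : g' c * w = 1 := by
          rw [hw]
          exact hu.mul_val_inv
        refine ⟨c + (-(g c) * w), ?_, ?_⟩
        · have hpg : (p : ZMod (p^F)) ∣ g c := dvd_trans (dvd_pow_self _ (by omega : k ≠ 0)) hc2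
          have : c + (-(g c) * w) - c₀ = (c - c₀) + (-(g c) * w) := by ring
          rw [this]
          exact dvd_add hc1 ((dvd_neg.mpr hpg).mul_right w)
        · rw [taylor]
          have he : g c + g' c * (-(g c) * w) + (-(g c) * w)^2 * h c (-(g c) * w)
              = (g c)^2 * (w^2 * h c (-(g c)*w)) := by
            have : g' c * (-(g c) * w) = -(g c) * (g' c * w) := by ring
            rw [this, hw1]; ring
          rw [he]
          have : (p : ZMod (p^F))^(k+1) ∣ (g c)^2 := by
            have h2k : (p : ZMod (p^F))^(k+1) ∣ (p : ZMod (p^F))^(2*k) := pow_dvd_pow _ (by omega)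
            exact dvd_trans h2k (by rw [two_mul, pow_add, sq]; exact mul_dvd_mul hc2 hc2)
          exact Dvd.dvd.mul_right this _
  obtain ⟨c, hc1, hc2⟩ := key F hF
  have hpF : (p : ZMod (p^F))^F = 0 := by
    have : ((p^F : ℕ) : ZMod (p^F)) = 0 := ZMod.natCast_self _
    rwa [Nat.cast_pow] at this
  have hgc : g c = 0 := by
    obtain ⟨t, ht⟩ := hc2
    rw [ht, hpF, zero_mul]
  refine ⟨c, ⟨hc1, hgc⟩, ?_⟩
  rintro c' ⟨hc1', hgc'⟩
  have ht : (p : ZMod (p^F)) ∣ (c' - c) := by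
    have : c' - c = (c' - c₀) - (c - c₀) := by ring
    rw [this]; exact dvd_sub hc1' hc1
  have htay := taylor c (c' - c)
  have hcc : c + (c' - c) = c' := by ring
  rw [hcc, hgc', hgc, zero_add] at htay
  have hfac : (c' - c) * (g' c + (c' - c) * h c (c' - c)) = 0 := by
    linear_combination -htay
  have hun : IsUnit (g' c + (c' - c) * h c (c' - c)) := by
    apply isUnit_of_not_p_dvd
    intro hd
    apply hder c hc1
    have : g' c = (g' c + (c' - c) * h c (c' - c)) - (c' - c) * h c (c' - c) := by ring
    rw [this]
    exact dvd_sub hd (Dvd.dvd.mul_right ht _)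
  have hz := (IsUnit.mul_left_eq_zero hun).mp hfac
  linear_combination hz

lemma card_pdvd {F : ℕ} (hF : 1 ≤ F) :
    Nat.card {x : ZMod (p^F) // (p : ZMod (p^F)) ∣ x} = p^(F-1) := by
  haveI := aux_neZero (p := p) F
  haveI := aux_neZero (p := p) (F-1)
  have hp0 : 0 < p := hp.out.pos
  have hsplit : p^F = p * p^(F-1) := by
    rw [← pow_succ']; congr 1; omega
  have hpF0 : (p : ZMod (p^F))^F = 0 := by
    have : ((p^F : ℕ) : ZMod (p^F)) = 0 := ZMod.natCast_self _
    rwa [Nat.cast_pow] at this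
  have hbij : Function.Bijective
      (fun y : ZMod (p^(F-1)) => (⟨((p * y.val : ℕ) : ZMod (p^F)), ⟨((y.val : ℕ) : ZMod (p^F)), by push_cast; ring⟩⟩ :
        {x : ZMod (p^F) // (p : ZMod (p^F)) ∣ x})) := by
    constructor
    · intro y y' hyy
      have h1 : ((p * y.val : ℕ) : ZMod (p^F)) = ((p * y'.val : ℕ) : ZMod (p^F)) := congrArg Subtype.val hyy
      have hlt : p * y.val < p^F := by
        rw [hsplit]; exact mul_lt_mul_of_pos_left (ZMod.val_lt y) hp0
      have hlt' : p * y'.val < p^F := by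
        rw [hsplit]; exact mul_lt_mul_of_pos_left (ZMod.val_lt y') hp0
      have h2 := congrArg ZMod.val h1
      rw [ZMod.val_cast_of_lt hlt, ZMod.val_cast_of_lt hlt'] at h2
      exact ZMod.val_injective _ (Nat.eq_of_mul_eq_mul_left hp0 h2)
    · rintro ⟨x, z, hz⟩
      refine ⟨((z.val : ℕ) : ZMod (p^(F-1))), Subtype.ext ?_⟩
      simp only
      set q := z.val / p^(F-1) with hq
      set r := z.val % p^(F-1) with hr
      have hval : ((z.val : ℕ) : ZMod (p^(F-1))).val = r := ZMod.val_natCast _ _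
      have h := Nat.div_add_mod z.val (p^(F-1))
      have hnat : p * z.val = p^F * q + p * r := by
        rw [← h, Nat.mul_add, ← Nat.mul_assoc, ← hsplit]
      have : ((p * ((z.val : ℕ) : ZMod (p^(F-1))).val : ℕ) : ZMod (p^F)) = ((p * z.val : ℕ) : ZMod (p^F)) := by
        rw [hval, hnat]
        push_cast
        rw [hpF0]
        ring
      rw [this, hz]
      push_cast
      rw [ZMod.natCast_zmod_val]
  rw [← Nat.card_zmod (p^(F-1))]
  exact (Nat.card_eq_of_bijective _ hbij).symm

lemma fiber_measurable [MeasurableSpace ℤ_[p]] [BorelSpace ℤ_[p]]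
    (F : ℕ) (t : ZMod (p^F) × ZMod (p^F)) :
    MeasurableSet {x : ℤ_[p] × ℤ_[p] | PadicInt.toZModPow F x.1 = t.1 ∧ PadicInt.toZModPow F x.2 = t.2} := by
  haveI := aux_neZero (p := p) F
  have hD : {y : ℤ_[p] | PadicInt.toZModPow F y = 0}
      = Metric.closedBall 0 ((p:ℝ)^(-(F:ℤ))) := by
    ext y
    rw [Set.mem_setOf_eq, Metric.mem_closedBall, dist_zero_right]
    rw [show ((-(F:ℤ)) = (-(F:ℕ) : ℤ)) from rfl, PadicInt.norm_le_pow_iff_mem_span_pow]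
    constructor
    · intro h
      rw [← PadicInt.ker_toZModPow]; exact h
    · intro h
      rw [← PadicInt.ker_toZModPow] at h; exact h
  have hmeas0 : MeasurableSet {x : ℤ_[p] × ℤ_[p] | PadicInt.toZModPow F x.1 = 0 ∧ PadicInt.toZModPow F x.2 = 0} := by
    have : {x : ℤ_[p] × ℤ_[p] | PadicInt.toZModPow F x.1 = 0 ∧ PadicInt.toZModPow F x.2 = 0}
        = Prod.fst ⁻¹' {y : ℤ_[p] | PadicInt.toZModPow F y = 0}
        ∩ Prod.snd ⁻¹' {y : ℤ_[p] | PadicInt.toZModPow F y = 0} := by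
      ext x; simp [Set.mem_setOf_eq]
    rw [this, hD]
    exact (measurable_fst measurableSet_closedBall).inter (measurable_snd measurableSet_closedBall)
  have htrans : {x : ℤ_[p] × ℤ_[p] | PadicInt.toZModPow F x.1 = t.1 ∧ PadicInt.toZModPow F x.2 = t.2}
      = (fun x => (-(((t.1.val : ℕ) : ℤ_[p]), ((t.2.val : ℕ) : ℤ_[p])) + x)) ⁻¹'
        {x : ℤ_[p] × ℤ_[p] | PadicInt.toZModPow F x.1 = 0 ∧ PadicInt.toZModPow F x.2 = 0} := by
    ext x
    simp only [Set.mem_preimage, Set.mem_setOf_eq, Prod.fst_add, Prod.snd_add,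
      Prod.fst_neg, Prod.snd_neg, map_add, map_neg, map_natCast, ZMod.natCast_zmod_val]
    constructor
    · rintro ⟨h1, h2⟩; rw [h1, h2]; simp
    · rintro ⟨h1, h2⟩
      constructor
      · have := congrArg (fun z => t.1 + z) h1; simpa using this
      · have := congrArg (fun z => t.2 + z) h2; simpa using this
  rw [htrans]
  exact hmeas0.preimage (measurable_const_add _)

lemma fiber_measure [MeasurableSpace ℤ_[p]] [BorelSpace ℤ_[p]]
    (μ : Measure (ℤ_[p] × ℤ_[p])) [μ.IsAddHaarMeasure] (hμ : μ Set.univ = 1)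
    (F : ℕ) (s : ZMod (p^F) × ZMod (p^F)) :
    μ {x : ℤ_[p] × ℤ_[p] | PadicInt.toZModPow F x.1 = s.1 ∧ PadicInt.toZModPow F x.2 = s.2}
      = (((p^F : ℕ) : ℝ≥0∞) * ((p^F : ℕ) : ℝ≥0∞))⁻¹ := by
  haveI := aux_neZero (p := p) F
  set fib : ZMod (p^F) × ZMod (p^F) → Set (ℤ_[p] × ℤ_[p]) :=
    fun t => {x | PadicInt.toZModPow F x.1 = t.1 ∧ PadicInt.toZModPow F x.2 = t.2} with hfib
  have htrans : ∀ t : ZMod (p^F) × ZMod (p^F),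
      fib t = (fun x => (-(((t.1.val : ℕ) : ℤ_[p]), ((t.2.val : ℕ) : ℤ_[p])) + x)) ⁻¹' fib 0 := by
    intro t
    ext x
    simp only [hfib, Set.mem_preimage, Set.mem_setOf_eq, Prod.fst_add, Prod.snd_add,
      Prod.fst_neg, Prod.snd_neg, map_add, map_neg, map_natCast, ZMod.natCast_zmod_val]
    constructor
    · rintro ⟨h1, h2⟩; rw [h1, h2]; simp
    · rintro ⟨h1, h2⟩
      constructor
      · have := congrArg (fun z => t.1 + z) h1; simpa using this
      · have := congrArg (fun z => t.2 + z) h2; simpa using this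
  have hmeas : ∀ t, MeasurableSet (fib t) := fun t => fiber_measurable F t
  have hμt : ∀ t, μ (fib t) = μ (fib 0) := by
    intro t
    rw [htrans t]
    exact measure_preimage_add μ _ _
  have hdisj : Pairwise (Function.onFun Disjoint fib) := by
    intro t t' htt'
    refine Set.disjoint_left.mpr ?_
    rintro x ⟨h1, h2⟩ ⟨h1', h2'⟩
    exact htt' (Prod.ext (h1 ▸ h1') (h2 ▸ h2'))
  have hcover : (Set.univ : Set (ℤ_[p] × ℤ_[p])) = ⋃ t, fib t := by
    ext x
    simp only [Set.mem_univ, Set.mem_iUnion, true_iff]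
    exact ⟨(PadicInt.toZModPow F x.1, PadicInt.toZModPow F x.2), rfl, rfl⟩
  have hsum : (1 : ℝ≥0∞) = (((p^F : ℕ) : ℝ≥0∞) * ((p^F : ℕ) : ℝ≥0∞)) * μ (fib 0) := by
    rw [← hμ, hcover, measure_iUnion hdisj hmeas, tsum_fintype]
    simp only [hμt]
    rw [Finset.sum_const, Finset.card_univ, Fintype.card_prod, ZMod.card, nsmul_eq_mul]
    push_cast
    ring
  have hc0 : (((p^F : ℕ) : ℝ≥0∞) * ((p^F : ℕ) : ℝ≥0∞)) ≠ 0 := by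
    simp [pow_ne_zero, hp.out.ne_zero]
  have hct : (((p^F : ℕ) : ℝ≥0∞) * ((p^F : ℕ) : ℝ≥0∞)) ≠ ⊤ := by
    simp [ENNReal.mul_ne_top]
  calc μ (fib s) = μ (fib 0) := hμt s
    _ = (((p^F : ℕ) : ℝ≥0∞) * ((p^F : ℕ) : ℝ≥0∞))⁻¹ := by
        rw [← one_mul (μ (fib 0)), ← ENNReal.inv_mul_cancel hc0 hct, mul_assoc, ← hsum, mul_one]

lemma stmt_arith {F : ℕ} (hF : 1 ≤ F) :
    ((p^(F-1) : ℕ) : ℝ≥0∞) * (((p^F:ℕ):ℝ≥0∞) * ((p^F:ℕ):ℝ≥0∞))⁻¹ = (p:ℝ≥0∞)^(-(F:ℤ)-1) := by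
  have hp0 : (p:ℝ≥0∞) ≠ 0 := by simp [hp.out.ne_zero]
  have hpt : (p:ℝ≥0∞) ≠ ⊤ := by simp
  push_cast
  rw [← pow_add]
  rw [show ((p:ℝ≥0∞)^(F-1)) = (p:ℝ≥0∞)^((F-1:ℕ):ℤ) from (zpow_natCast _ _).symm,
      show ((p:ℝ≥0∞)^(F+F)) = (p:ℝ≥0∞)^((F+F:ℕ):ℤ) from (zpow_natCast _ _).symm,
      ← ENNReal.zpow_neg, ← ENNReal.zpow_add hp0 hpt]
  congr 1
  omega

end StmtAux

/-- The Weierstrass curve `Y² + α₃Y = X³ + α₁X² + α₂X` over `ℤ`. -/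
def Wcurve (α₁ α₂ α₃ : ℤ) : WeierstrassCurve ℤ :=
  { a₁ := 0, a₂ := α₁, a₃ := α₃, a₄ := α₂, a₆ := 0 }

/-- Let `α₁, α₂, α₃ ∈ ℤ` define the elliptic curve
`E : Y² + α₃Y = X³ + α₁X² + α₂X` over `ℚ` with discriminant `Δ_E ≠ 0`, and let `p` be a
prime dividing neither `Δ_E` nor `α₁α₂α₃`. Then for every `F ≥ 1`, the normalized Haar
measure of `{(b,c) ∈ ℤ_p² : v(b) = 0, v(c) = 0, v(α₃ − c) ≥ 1, v(α₁b + α₂) ≥ 1,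
v(b³ + α₁b² + α₂b − c² − α₃c) ≥ F}` equals `p^{−F−1}` times the number of points
`(x,y) ∈ 𝔽_p²` with `α₁x + α₂ = 0`, `y = α₃` on the reduction of `E` modulo `p`. -/
theorem stmt_12 (α₁ α₂ α₃ : ℤ) (hΔ : (Wcurve α₁ α₂ α₃).Δ ≠ 0)
    (p : ℕ) [Fact p.Prime] (hpΔ : ¬ (p : ℤ) ∣ (Wcurve α₁ α₂ α₃).Δ)
    (hpα : ¬ (p : ℤ) ∣ α₁ * α₂ * α₃)
    [MeasurableSpace ℤ_[p]] [BorelSpace ℤ_[p]]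
    (μ : Measure (ℤ_[p] × ℤ_[p])) [μ.IsAddHaarMeasure] (hμ : μ Set.univ = 1)
    (F : ℕ) (hF : 1 ≤ F) :
    μ {bc : ℤ_[p] × ℤ_[p] |
        ¬ (p : ℤ_[p]) ∣ bc.1 ∧ ¬ (p : ℤ_[p]) ∣ bc.2 ∧
        (p : ℤ_[p]) ∣ ((α₃ : ℤ_[p]) - bc.2) ∧
        (p : ℤ_[p]) ∣ ((α₁ : ℤ_[p]) * bc.1 + (α₂ : ℤ_[p])) ∧
        (p : ℤ_[p]) ^ F ∣
          (bc.1 ^ 3 + (α₁ : ℤ_[p]) * bc.1 ^ 2 + (α₂ : ℤ_[p]) * bc.1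
            - bc.2 ^ 2 - (α₃ : ℤ_[p]) * bc.2)}
      = (p : ℝ≥0∞) ^ (-(F : ℤ) - 1) *
        (Nat.card {xy : ZMod p × ZMod p //
          (α₁ : ZMod p) * xy.1 + (α₂ : ZMod p) = 0 ∧ xy.2 = (α₃ : ZMod p) ∧
          xy.2 ^ 2 + (α₃ : ZMod p) * xy.2
            = xy.1 ^ 3 + (α₁ : ZMod p) * xy.1 ^ 2 + (α₂ : ZMod p) * xy.1} : ℝ≥0∞) := by
  classical
  haveI := aux_neZero (p := p) F
  have hp' : p.Prime := Fact.out
  have hdF : p ∣ p^F := dvd_pow_self p (by omega : F ≠ 0)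
  set π : ZMod (p^F) →+* ZMod p := ZMod.castHom hdF (ZMod p) with hπdef
  have hdvd : ∀ x : ZMod (p^F), ((p : ZMod (p^F)) ∣ x ↔ π x = 0) :=
    fun x => dvd_iff_cast_eq_zero hF hdF x
  -- divisibility facts
  have hpα₁ : ¬ (p:ℤ) ∣ α₁ := fun h => hpα (dvd_mul_of_dvd_left (dvd_mul_of_dvd_left h α₂) α₃)
  have hpα₂ : ¬ (p:ℤ) ∣ α₂ := fun h => hpα (dvd_mul_of_dvd_left (dvd_mul_of_dvd_right h α₁) α₃)
  have hpα₃ : ¬ (p:ℤ) ∣ α₃ := fun h => hpα (dvd_mul_of_dvd_right h _)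
  have hα₁ : (α₁ : ZMod p) ≠ 0 := fun h => hpα₁ ((ZMod.intCast_zmod_eq_zero_iff_dvd _ _).mp h)
  have hα₂ : (α₂ : ZMod p) ≠ 0 := fun h => hpα₂ ((ZMod.intCast_zmod_eq_zero_iff_dvd _ _).mp h)
  have hα₃ : (α₃ : ZMod p) ≠ 0 := fun h => hpα₃ ((ZMod.intCast_zmod_eq_zero_iff_dvd _ _).mp h)
  have hα₁q : ¬ (p:ZMod (p^F)) ∣ ((α₁:ℤ) : ZMod (p^F)) := by
    rw [hdvd, map_intCast]; exact hα₁
  have hα₂q : ¬ (p:ZMod (p^F)) ∣ ((α₂:ℤ) : ZMod (p^F)) := by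
    rw [hdvd, map_intCast]; exact hα₂
  have hα₃q : ¬ (p:ZMod (p^F)) ∣ ((α₃:ℤ) : ZMod (p^F)) := by
    rw [hdvd, map_intCast]; exact hα₃
  set x₀ : ZMod p := -(α₂:ZMod p) * (α₁:ZMod p)⁻¹ with hx₀def
  have hx0 : (α₁:ZMod p) * x₀ + (α₂:ZMod p) = 0 := by
    rw [hx₀def]
    field_simp
    ring
  have hxeq : ∀ x : ZMod p, (α₁:ZMod p) * x + (α₂:ZMod p) = 0 → x = x₀ := by
    intro x hx
    apply mul_left_cancel₀ hα₁
    linear_combination hx - hx0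
  -- the predicate on ZMod (p^F) pairs
  set P : ZMod (p^F) × ZMod (p^F) → Prop := fun s =>
    ¬ (p:ZMod (p^F)) ∣ s.1 ∧ ¬ (p:ZMod (p^F)) ∣ s.2 ∧
    (p:ZMod (p^F)) ∣ ((α₃:ZMod (p^F)) - s.2) ∧
    (p:ZMod (p^F)) ∣ ((α₁:ZMod (p^F)) * s.1 + (α₂:ZMod (p^F))) ∧
    s.1^3 + (α₁:ZMod (p^F))*s.1^2 + (α₂:ZMod (p^F))*s.1 - s.2^2 - (α₃:ZMod (p^F))*s.2 = 0
    with hPdef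
  set fib : ZMod (p^F) × ZMod (p^F) → Set (ℤ_[p] × ℤ_[p]) := fun t =>
    {x | PadicInt.toZModPow F x.1 = t.1 ∧ PadicInt.toZModPow F x.2 = t.2} with hfibdef
  have hAeq : {bc : ℤ_[p] × ℤ_[p] |
        ¬ (p : ℤ_[p]) ∣ bc.1 ∧ ¬ (p : ℤ_[p]) ∣ bc.2 ∧
        (p : ℤ_[p]) ∣ ((α₃ : ℤ_[p]) - bc.2) ∧
        (p : ℤ_[p]) ∣ ((α₁ : ℤ_[p]) * bc.1 + (α₂ : ℤ_[p])) ∧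
        (p : ℤ_[p]) ^ F ∣
          (bc.1 ^ 3 + (α₁ : ℤ_[p]) * bc.1 ^ 2 + (α₂ : ℤ_[p]) * bc.1
            - bc.2 ^ 2 - (α₃ : ℤ_[p]) * bc.2)}
      = ⋃ t ∈ Finset.univ.filter P, fib t := by
    ext x
    simp only [Set.mem_setOf_eq, Set.mem_iUnion, Finset.mem_filter, Finset.mem_univ, true_and,
      hfibdef, hPdef]
    constructor
    · rintro ⟨h1, h2, h3, h4, h5⟩
      refine ⟨(PadicInt.toZModPow F x.1, PadicInt.toZModPow F x.2), ⟨?_, ?_, ?_, ?_, ?_⟩, rfl, rfl⟩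
      · exact fun hd => h1 ((dvd_iff_toZModPow hF x.1).mpr hd)
      · exact fun hd => h2 ((dvd_iff_toZModPow hF x.2).mpr hd)
      · have := (dvd_iff_toZModPow hF _).mp h3
        rwa [map_sub, map_intCast] at this
      · have := (dvd_iff_toZModPow hF _).mp h4
        rwa [map_add, map_mul, map_intCast, map_intCast] at this
      · have := (pow_dvd_iff_toZModPow F _).mp h5
        simp only [map_sub, map_add, map_mul, map_pow, map_intCast] at this
        exact this
    · rintro ⟨⟨t1, t2⟩, ⟨h1, h2, h3, h4, h5⟩, e1, e2⟩
      simp only at e1 e2 h1 h2 h3 h4 h5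
      subst e1; subst e2
      refine ⟨?_, ?_, ?_, ?_, ?_⟩
      · exact fun hd => h1 ((dvd_iff_toZModPow hF x.1).mp hd)
      · exact fun hd => h2 ((dvd_iff_toZModPow hF x.2).mp hd)
      · rw [dvd_iff_toZModPow hF, map_sub, map_intCast]
        exact h3
      · rw [dvd_iff_toZModPow hF, map_add, map_mul, map_intCast, map_intCast]
        exact h4
      · rw [pow_dvd_iff_toZModPow F]
        simp only [map_sub, map_add, map_mul, map_pow, map_intCast]
        exact h5
  have hμA : μ {bc : ℤ_[p] × ℤ_[p] |
        ¬ (p : ℤ_[p]) ∣ bc.1 ∧ ¬ (p : ℤ_[p]) ∣ bc.2 ∧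
        (p : ℤ_[p]) ∣ ((α₃ : ℤ_[p]) - bc.2) ∧
        (p : ℤ_[p]) ∣ ((α₁ : ℤ_[p]) * bc.1 + (α₂ : ℤ_[p])) ∧
        (p : ℤ_[p]) ^ F ∣
          (bc.1 ^ 3 + (α₁ : ℤ_[p]) * bc.1 ^ 2 + (α₂ : ℤ_[p]) * bc.1
            - bc.2 ^ 2 - (α₃ : ℤ_[p]) * bc.2)}
      = ((Finset.univ.filter P).card : ℝ≥0∞) * (((p^F:ℕ):ℝ≥0∞) * ((p^F:ℕ):ℝ≥0∞))⁻¹ := by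
    rw [hAeq]
    rw [measure_biUnion_finset ?hd (fun t _ => fiber_measurable F t)]
    case hd =>
      intro a _ b _ hab
      refine Set.disjoint_left.mpr ?_
      rintro x ⟨e1, e2⟩ ⟨e1', e2'⟩
      exact hab (Prod.ext (e1.symm.trans e1') (e2.symm.trans e2'))
    rw [Finset.sum_congr rfl (fun t _ => fiber_measure μ hμ F t), Finset.sum_const, nsmul_eq_mul]
  have hcard : ((Finset.univ.filter P).card : ℕ)
      = Nat.card {s : ZMod (p^F) × ZMod (p^F) // P s} := by
    rw [Nat.card_eq_fintype_card, Fintype.card_subtype]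
  by_cases hE : (α₃:ZMod p)^2 + (α₃:ZMod p)*(α₃:ZMod p)
      = x₀^3 + (α₁:ZMod p)*x₀^2 + (α₂:ZMod p)*x₀
  · -- solvable case
    have hN : Nat.card {xy : ZMod p × ZMod p //
        (α₁ : ZMod p) * xy.1 + (α₂ : ZMod p) = 0 ∧ xy.2 = (α₃ : ZMod p) ∧
        xy.2 ^ 2 + (α₃ : ZMod p) * xy.2
          = xy.1 ^ 3 + (α₁ : ZMod p) * xy.1 ^ 2 + (α₂ : ZMod p) * xy.1} = 1 := by
      rw [Nat.card_eq_one_iff_unique]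
      constructor
      · constructor
        rintro ⟨⟨x, y⟩, hx1, hx2, hx3⟩ ⟨⟨x', y'⟩, hx1', hx2', hx3'⟩
        have e1 : x = x₀ := hxeq _ hx1
        have e1' : x' = x₀ := hxeq _ hx1'
        exact Subtype.ext (Prod.ext (e1.trans e1'.symm) (hx2.trans hx2'.symm))
      · exact ⟨⟨(x₀, (α₃:ZMod p)), hx0, rfl, by linear_combination hE⟩⟩
    -- unit of α₁ in ZMod (p^F)
    have hu : IsUnit ((α₁:ℤ) : ZMod (p^F)) := isUnit_of_not_p_dvd hα₁q
    have h1 : ((α₁:ℤ) : ZMod (p^F)) * ↑hu.unit⁻¹ = 1 := by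
      have h := hu.unit.mul_inv
      rwa [hu.unit_spec] at h
    have hSP : Nat.card {s : ZMod (p^F) × ZMod (p^F) // P s} = p^(F-1) := by
      by_cases hp3 : p = 3
      · -- p = 3 : Hensel in the first variable
        have h3z : ((3:ℕ):ZMod p) = 0 := by
          subst hp3; exact ZMod.natCast_self 3
        have h3z' : (3:ZMod p) = 0 := by
          rw [show (3:ZMod p) = ((3:ℕ):ZMod p) by norm_cast]; exact h3z
        set b₀ : ZMod (p^F) := ↑hu.unit⁻¹ * (-(α₂:ZMod (p^F))) with hb₀def
        have hπu : (α₁:ZMod p) * π ↑hu.unit⁻¹ = 1 := by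
          have := congrArg π h1
          rwa [map_mul, map_intCast, map_one] at this
        have hπb₀ : π b₀ = x₀ := by
          rw [hb₀def, map_mul, map_neg, map_intCast]
          have : π ↑hu.unit⁻¹ = (α₁:ZMod p)⁻¹ := eq_inv_of_mul_eq_one_right hπu
          rw [this, hx₀def]; ring
        have hα₁b₀ : ((α₁:ℤ):ZMod (p^F)) * b₀ + ((α₂:ℤ):ZMod (p^F)) = 0 := by
          rw [hb₀def]; linear_combination (-((α₂:ℤ):ZMod (p^F))) * h1
        have hfiber : ∀ c : ZMod (p^F), (p:ZMod (p^F)) ∣ (((α₃:ℤ):ZMod (p^F)) - c) →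
            ∃! b, P (b, c) := by
          intro c hc
          have hπc : π c = (α₃:ZMod p) := by
            have := (hdvd _).mp hc
            rw [map_sub, map_intCast] at this
            linear_combination -this
          have hEU := hensel_count hF
            (fun b => b^3 + ((α₁:ℤ):ZMod (p^F))*b^2 + ((α₂:ℤ):ZMod (p^F))*b
              - (c^2 + ((α₃:ℤ):ZMod (p^F))*c))
            (fun b => 3*b^2 + 2*((α₁:ℤ):ZMod (p^F))*b + ((α₂:ℤ):ZMod (p^F)))
            (fun x t => 3*x + ((α₁:ℤ):ZMod (p^F)) + t)
            (by intro x t; ring) b₀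
            (by
              rw [hdvd]
              simp only [map_sub, map_add, map_mul, map_pow, map_intCast]
              rw [hπb₀, hπc]
              linear_combination -hE)
            (by
              intro x hx
              rw [hdvd]
              intro hdd
              have hπx : π x = x₀ := by
                have := (hdvd _).mp hx
                rw [map_sub] at this
                linear_combination this + hπb₀
              simp only [map_add, map_mul, map_pow, map_intCast, map_ofNat] at hdd
              rw [hπx] at hdd
              exact hα₂ (by linear_combination -hdd + x₀^2*h3z' + 2*hx0))
          have hiff : ∀ b, P (b, c) ↔
              ((p:ZMod (p^F)) ∣ (b - b₀) ∧
                b^3 + ((α₁:ℤ):ZMod (p^F))*b^2 + ((α₂:ℤ):ZMod (p^F))*b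
                  - (c^2 + ((α₃:ℤ):ZMod (p^F))*c) = 0) := by
            intro b
            constructor
            · rintro ⟨h1', h2', h3', h4', h5'⟩
              constructor
              · have e : b - b₀ = ↑hu.unit⁻¹ * (((α₁:ℤ):ZMod (p^F))*b + ((α₂:ℤ):ZMod (p^F))) := by
                  rw [hb₀def]; linear_combination (-b) * h1
                rw [e]
                exact h4'.mul_left _
              · linear_combination h5'
            · rintro ⟨hd1, hd2⟩
              have e2 : ((α₁:ℤ):ZMod (p^F))*b + ((α₂:ℤ):ZMod (p^F))
                  = ((α₁:ℤ):ZMod (p^F))*(b - b₀) := by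
                linear_combination hα₁b₀
              have h4' : (p:ZMod (p^F)) ∣ (((α₁:ℤ):ZMod (p^F))*b + ((α₂:ℤ):ZMod (p^F))) := by
                rw [e2]; exact hd1.mul_left _
              refine ⟨?_, ?_, hc, h4', by linear_combination hd2⟩
              · intro hpb
                apply hα₂q
                have e3 : ((α₂:ℤ):ZMod (p^F))
                    = (((α₁:ℤ):ZMod (p^F))*b + ((α₂:ℤ):ZMod (p^F))) - ((α₁:ℤ):ZMod (p^F))*b := by
                  ring
                rw [e3]
                exact dvd_sub h4' (hpb.mul_left _)
              · intro hpc
                apply hα₃q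
                have e3 : ((α₃:ℤ):ZMod (p^F)) = (((α₃:ℤ):ZMod (p^F)) - c) + c := by ring
                rw [e3]
                exact dvd_add hc hpc
          exact (existsUnique_congr hiff).mpr hEU
        have hbij1 : Function.Bijective
            (fun s : {s : ZMod (p^F) × ZMod (p^F) // P s} =>
              (⟨s.1.2, s.2.2.2.1⟩ : {c : ZMod (p^F) //
                (p:ZMod (p^F)) ∣ (((α₃:ℤ):ZMod (p^F)) - c)})) := by
          constructor
          · rintro ⟨⟨b, c⟩, hs⟩ ⟨⟨b', c'⟩, hs'⟩ hbb
            have hc : c = c' := congrArg Subtype.val hbb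
            subst hc
            obtain ⟨b0, hb0, huniq⟩ := hfiber c hs.2.2.1
            exact Subtype.ext (Prod.ext ((huniq b hs).trans (huniq b' hs').symm) rfl)
          · rintro ⟨c, hc⟩
            obtain ⟨b, hb, -⟩ := hfiber c hc
            exact ⟨⟨(b, c), hb⟩, rfl⟩
        have e2 : {c : ZMod (p^F) // (p:ZMod (p^F)) ∣ (((α₃:ℤ):ZMod (p^F)) - c)}
            ≃ {x : ZMod (p^F) // (p:ZMod (p^F)) ∣ x} :=
          { toFun := fun c => ⟨((α₃:ℤ):ZMod (p^F)) - c.1, c.2⟩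
            invFun := fun x => ⟨((α₃:ℤ):ZMod (p^F)) - x.1, by rw [sub_sub_cancel]; exact x.2⟩
            left_inv := fun c => Subtype.ext (sub_sub_cancel _ _)
            right_inv := fun x => Subtype.ext (sub_sub_cancel _ _) }
        rw [Nat.card_eq_of_bijective _ hbij1, Nat.card_congr e2, card_pdvd hF]
      · -- p ≠ 3 : Hensel in the second variable
        have h3 : (3:ZMod p) ≠ 0 := by
          rw [show (3:ZMod p) = ((3:ℕ):ZMod p) by norm_cast, Ne,
            ZMod.natCast_eq_zero_iff]
          intro hd
          exact hp3 ((Nat.prime_dvd_prime_iff_eq hp' (by norm_num)).mp hd)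
        have hfiber : ∀ b : ZMod (p^F),
            (p:ZMod (p^F)) ∣ (((α₁:ℤ):ZMod (p^F)) * b + ((α₂:ℤ):ZMod (p^F))) →
            ∃! c, P (b, c) := by
          intro b hb
          have hπb : π b = x₀ := by
            apply hxeq
            have := (hdvd _).mp hb
            rwa [map_add, map_mul, map_intCast, map_intCast] at this
          have hEU := hensel_count hF
            (fun c => c^2 + ((α₃:ℤ):ZMod (p^F))*c
              - (b^3 + ((α₁:ℤ):ZMod (p^F))*b^2 + ((α₂:ℤ):ZMod (p^F))*b))
            (fun c => 2*c + ((α₃:ℤ):ZMod (p^F)))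
            (fun _ _ => 1)
            (by intro x t; ring) ((α₃:ℤ) : ZMod (p^F))
            (by
              rw [hdvd]
              simp only [map_sub, map_add, map_mul, map_pow, map_intCast]
              rw [hπb]
              linear_combination hE)
            (by
              intro x hx
              rw [hdvd]
              intro hdd
              have hπx : π x = (α₃:ZMod p) := by
                have := (hdvd _).mp hx
                rw [map_sub, map_intCast] at this
                linear_combination this
              simp only [map_add, map_mul, map_intCast, map_ofNat] at hdd
              exact mul_ne_zero h3 hα₃ (by linear_combination hdd - 2*hπx))
          have hiff : ∀ c, P (b, c) ↔
              ((p:ZMod (p^F)) ∣ (c - ((α₃:ℤ):ZMod (p^F))) ∧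
                c^2 + ((α₃:ℤ):ZMod (p^F))*c
                  - (b^3 + ((α₁:ℤ):ZMod (p^F))*b^2 + ((α₂:ℤ):ZMod (p^F))*b) = 0) := by
            intro c
            constructor
            · rintro ⟨h1', h2', h3', h4', h5'⟩
              exact ⟨dvd_sub_comm.mp h3', by linear_combination -h5'⟩
            · rintro ⟨hd1, hd2⟩
              have h3' : (p:ZMod (p^F)) ∣ (((α₃:ℤ):ZMod (p^F)) - c) := dvd_sub_comm.mp hd1
              refine ⟨?_, ?_, h3', hb, by linear_combination -hd2⟩
              · intro hpb
                apply hα₂q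
                have e3 : ((α₂:ℤ):ZMod (p^F))
                    = (((α₁:ℤ):ZMod (p^F))*b + ((α₂:ℤ):ZMod (p^F))) - ((α₁:ℤ):ZMod (p^F))*b := by
                  ring
                rw [e3]
                exact dvd_sub hb (hpb.mul_left _)
              · intro hpc
                apply hα₃q
                have e3 : ((α₃:ℤ):ZMod (p^F)) = (((α₃:ℤ):ZMod (p^F)) - c) + c := by ring
                rw [e3]
                exact dvd_add h3' hpc
          exact (existsUnique_congr hiff).mpr hEU
        have hbij1 : Function.Bijective
            (fun s : {s : ZMod (p^F) × ZMod (p^F) // P s} =>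
              (⟨s.1.1, s.2.2.2.2.1⟩ : {b : ZMod (p^F) //
                (p:ZMod (p^F)) ∣ (((α₁:ℤ):ZMod (p^F)) * b + ((α₂:ℤ):ZMod (p^F)))})) := by
          constructor
          · rintro ⟨⟨b, c⟩, hs⟩ ⟨⟨b', c'⟩, hs'⟩ hbb
            have hbeq : b = b' := congrArg Subtype.val hbb
            subst hbeq
            obtain ⟨c0, hc0, huniq⟩ := hfiber b hs.2.2.2.1
            exact Subtype.ext (Prod.ext rfl ((huniq c hs).trans (huniq c' hs').symm))
          · rintro ⟨b, hb⟩
            obtain ⟨c, hc, -⟩ := hfiber b hb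
            exact ⟨⟨(b, c), hc⟩, rfl⟩
        have e2 : {b : ZMod (p^F) // (p:ZMod (p^F)) ∣ (((α₁:ℤ):ZMod (p^F)) * b + ((α₂:ℤ):ZMod (p^F)))}
            ≃ {x : ZMod (p^F) // (p:ZMod (p^F)) ∣ x} :=
          { toFun := fun b => ⟨((α₁:ℤ):ZMod (p^F)) * b.1 + ((α₂:ℤ):ZMod (p^F)), b.2⟩
            invFun := fun x => ⟨↑hu.unit⁻¹ * (x.1 - ((α₂:ℤ):ZMod (p^F))), by
              have e : ((α₁:ℤ):ZMod (p^F)) * (↑hu.unit⁻¹ * (x.1 - ((α₂:ℤ):ZMod (p^F))))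
                  + ((α₂:ℤ):ZMod (p^F)) = x.1 := by
                linear_combination (x.1 - ((α₂:ℤ):ZMod (p^F))) * h1
              rw [e]
              exact x.2⟩
            left_inv := fun b => Subtype.ext (by linear_combination b.1 * h1)
            right_inv := fun x => Subtype.ext (by
              linear_combination (x.1 - ((α₂:ℤ):ZMod (p^F))) * h1) }
        rw [Nat.card_eq_of_bijective _ hbij1, Nat.card_congr e2, card_pdvd hF]
    rw [hμA, hN]
    rw [show (Finset.univ.filter P).card = p^(F-1) from hcard.trans hSP]
    rw [Nat.cast_one, mul_one]
    exact stmt_arith hF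
  · -- empty case
    have hN0 : Nat.card {xy : ZMod p × ZMod p //
        (α₁ : ZMod p) * xy.1 + (α₂ : ZMod p) = 0 ∧ xy.2 = (α₃ : ZMod p) ∧
        xy.2 ^ 2 + (α₃ : ZMod p) * xy.2
          = xy.1 ^ 3 + (α₁ : ZMod p) * xy.1 ^ 2 + (α₂ : ZMod p) * xy.1} = 0 := by
      rw [Nat.card_eq_zero]
      left
      constructor
      rintro ⟨⟨x, y⟩, h1, h2, h3⟩
      apply hE
      have ex : x = x₀ := hxeq _ h1
      rw [ex, h2] at h3
      linear_combination h3
    have hc0 : (Finset.univ.filter P) = ∅ := by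
      rw [Finset.filter_eq_empty_iff]
      rintro s -
      rintro ⟨h1, h2, h3, h4, h5⟩
      apply hE
      have hπ1 : π s.1 = x₀ := by
        apply hxeq
        have := (hdvd _).mp h4
        rwa [map_add, map_mul, map_intCast, map_intCast] at this
      have hπ2 : π s.2 = (α₃:ZMod p) := by
        have := (hdvd _).mp h3
        rw [map_sub, map_intCast] at this
        linear_combination -this
      have h5' := congrArg π h5
      simp only [map_sub, map_add, map_mul, map_pow, map_intCast, map_zero] at h5'
      rw [hπ1, hπ2] at h5'
      linear_combination -h5'
    rw [hμA, hc0, hN0]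
    simp
end

section
/- Let p be a prime with p ∤ α₁α₂α₃. Let M = (m_{ij}) be a 6×6 upper triangular integer matrix with diagonal entries m_{ii} = p^{M_i} (M_i ∈ ℕ), and let N be the 3×3 upper triangular integer matrix with rows (p^{N₁}, a, b), (0, p^{N₂}, c), (0, 0, p^{N₃}) (N_j ∈ ℕ, a, b, c ∈ ℤ), with adjugate N⁺. Suppose that for every i ∈ {1,…,6}: for each j ∈ {1,2,3} every entry of the row vector (m_{i4}, m_{i5}, m_{i6})·C(j)·N⁺ is divisible by p^{N₁+N₂+N₃}, and for each j ∈ {4,5,6} every entry of (m_{i1}, m_{i2}, m_{i3})·C(j)·N⁺ is divisible by p^{N₁+N₂+N₃}. Then M_i ≥ N₁ for all i ∈ {1,…,6}, M₃ ≥ N₂, M₆ ≥ N₂, M₂ ≥ N₃, and M₅ ≥ N₃. In particular, if M₁ + ⋯ + M₆ + N₁ + N₂ + N₃ = 5 then N₁ = 0, N₂ ≤ 1, N₃ ≤ 1 and N₂ + N₃ ≤ 1. -/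
open Matrix

/-- The six coefficient matrices `C(1), …, C(6)` of the Lie ring `L(E)`. -/
def Cmat (α₁ α₂ α₃ : ℤ) : Fin 6 → Matrix (Fin 3) (Fin 3) ℤ
  | 0 => !![α₁, 0, α₂; 1, 0, 0; 0, 1, α₃]
  | 1 => !![1, 0, 0; 0, 0, 1; 0, 0, 0]
  | 2 => !![0, 1, 0; 0, 0, 0; 1, 0, 0]
  | 3 => !![α₁, 0, α₂; 1, 0, 0; 0, 1, 0]
  | 4 => !![1, 0, 0; 0, 0, 1; 0, 0, 0]
  | 5 => !![0, 1, α₃; 0, 0, 0; 1, 0, 0]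

/-- The upper triangular matrix `N`. -/
def NmatZ (p : ℕ) (N₁ N₂ N₃ : ℕ) (a b c : ℤ) : Matrix (Fin 3) (Fin 3) ℤ :=
  !![(p : ℤ) ^ N₁, a, b; 0, (p : ℤ) ^ N₂, c; 0, 0, (p : ℤ) ^ N₃]

private lemma canc (P Q w : ℤ) (hQ : Q ≠ 0) (h : P * Q ∣ w * Q) : P ∣ w :=
  (mul_dvd_mul_iff_right hQ).mp h

/-- If every entry of `w · N⁺` is divisible by `p^{N₁+N₂+N₃}`, then `p^{N₁} ∣ w₀`,
and if moreover `w₀ = 0` then `p^{N₂} ∣ w₁`, and if also `w₁ = 0` then `p^{N₃} ∣ w₂`. -/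
private lemma key (p : ℕ) (hp : p.Prime) (N₁ N₂ N₃ : ℕ) (a b c : ℤ) (w : Fin 3 → ℤ)
    (h : ∀ k, (p:ℤ)^(N₁+N₂+N₃) ∣ Matrix.vecMul w (NmatZ p N₁ N₂ N₃ a b c).adjugate k) :
    ((p:ℤ)^N₁ ∣ w 0) ∧ (w 0 = 0 → (p:ℤ)^N₂ ∣ w 1) ∧
      (w 0 = 0 → w 1 = 0 → (p:ℤ)^N₃ ∣ w 2) := by
  have hp0 : (p:ℤ) ≠ 0 := Int.natCast_ne_zero.mpr hp.pos.ne'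
  have h0 := h 0; have h1 := h 1; have h2 := h 2
  simp [NmatZ, Matrix.adjugate_fin_three, Matrix.vecMul, dotProduct, Fin.sum_univ_three,
    pow_add, Matrix.vecHead, Matrix.vecTail] at h0 h1 h2
  refine ⟨?_, fun e0 => ?_, fun e0 e1 => ?_⟩
  · exact canc _ ((p:ℤ)^N₂*(p:ℤ)^N₃) _
      (mul_ne_zero (pow_ne_zero N₂ hp0) (pow_ne_zero N₃ hp0))
      (by convert h0 using 1 <;> ring)
  · rw [e0] at h1
    exact canc _ ((p:ℤ)^N₁*(p:ℤ)^N₃) _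
      (mul_ne_zero (pow_ne_zero N₁ hp0) (pow_ne_zero N₃ hp0))
      (by convert h1 using 1 <;> ring)
  · rw [e0, e1] at h2
    exact canc _ ((p:ℤ)^N₁*(p:ℤ)^N₂) _
      (mul_ne_zero (pow_ne_zero N₁ hp0) (pow_ne_zero N₂ hp0))
      (by convert h2 using 1 <;> ring)

private lemma le_of_pow_dvd {p m n : ℕ} (hp : p.Prime) (h : (p:ℤ)^m ∣ (p:ℤ)^n) : m ≤ n := by
  have h' : p^m ∣ p^n := by exact_mod_cast h
  exact (Nat.pow_dvd_pow_iff_le_right hp.one_lt).mp h'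

@[simp] private lemma fin_ca0 : Fin.castAdd 3 (0:Fin 3) = (0:Fin 6) := rfl
@[simp] private lemma fin_ca1 : Fin.castAdd 3 (1:Fin 3) = (1:Fin 6) := rfl
@[simp] private lemma fin_ca2 : Fin.castAdd 3 (2:Fin 3) = (2:Fin 6) := rfl
@[simp] private lemma fin_na0 : Fin.natAdd 3 (0:Fin 3) = (3:Fin 6) := rfl
@[simp] private lemma fin_na1 : Fin.natAdd 3 (1:Fin 3) = (4:Fin 6) := rfl
@[simp] private lemma fin_na2 : Fin.natAdd 3 (2:Fin 3) = (5:Fin 6) := rfl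
@[simp] private lemma fin_an0 : Fin.addNat (0:Fin 3) 3 = (3:Fin 6) := rfl
@[simp] private lemma fin_an1 : Fin.addNat (1:Fin 3) 3 = (4:Fin 6) := rfl
@[simp] private lemma fin_an2 : Fin.addNat (2:Fin 3) 3 = (5:Fin 6) := rfl

/-- Let `p` be a prime with `p ∤ α₁α₂α₃`, `M` a `6×6` upper triangular
integer matrix with diagonal entries `p^{M_i}` and `N` the `3×3` upper triangular matrix with
rows `(p^{N₁}, a, b)`, `(0, p^{N₂}, c)`, `(0, 0, p^{N₃})`, with adjugate `N⁺`. If for every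
`i` and each `j ∈ {1,2,3}` every entry of `(m_{i4}, m_{i5}, m_{i6})·C(j)·N⁺` is divisible by
`p^{N₁+N₂+N₃}`, and for each `j ∈ {4,5,6}` every entry of `(m_{i1}, m_{i2}, m_{i3})·C(j)·N⁺`
is divisible by `p^{N₁+N₂+N₃}`, then `M_i ≥ N₁` for all `i`, `M₃, M₆ ≥ N₂` and `M₂, M₅ ≥ N₃`;
in particular if `M₁ + ⋯ + M₆ + N₁ + N₂ + N₃ = 5` then `N₁ = 0`, `N₂ ≤ 1`, `N₃ ≤ 1` and
`N₂ + N₃ ≤ 1`. -/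
theorem stmt_14 (p : ℕ) (hp : p.Prime) (α₁ α₂ α₃ : ℤ) (hpα : ¬ (p : ℤ) ∣ α₁ * α₂ * α₃)
    (M : Matrix (Fin 6) (Fin 6) ℤ) (hMtri : ∀ i j : Fin 6, (j : ℕ) < (i : ℕ) → M i j = 0)
    (d : Fin 6 → ℕ) (hMdiag : ∀ i : Fin 6, M i i = (p : ℤ) ^ d i)
    (N₁ N₂ N₃ : ℕ) (a b c : ℤ)
    (hdvd : ∀ i : Fin 6,
      (∀ j : Fin 3, ∀ k : Fin 3,
        (p : ℤ) ^ (N₁ + N₂ + N₃) ∣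
          Matrix.vecMul (fun t : Fin 3 => M i (Fin.natAdd 3 t))
            (Cmat α₁ α₂ α₃ (Fin.castAdd 3 j) * (NmatZ p N₁ N₂ N₃ a b c).adjugate) k) ∧
      (∀ j : Fin 3, ∀ k : Fin 3,
        (p : ℤ) ^ (N₁ + N₂ + N₃) ∣
          Matrix.vecMul (fun t : Fin 3 => M i (Fin.castAdd 3 t))
            (Cmat α₁ α₂ α₃ (Fin.natAdd 3 j) * (NmatZ p N₁ N₂ N₃ a b c).adjugate) k)) :
    (∀ i : Fin 6, N₁ ≤ d i) ∧ N₂ ≤ d 2 ∧ N₂ ≤ d 5 ∧ N₃ ≤ d 1 ∧ N₃ ≤ d 4 ∧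
      (d 0 + d 1 + d 2 + d 3 + d 4 + d 5 + N₁ + N₂ + N₃ = 5 →
        N₁ = 0 ∧ N₂ ≤ 1 ∧ N₃ ≤ 1 ∧ N₂ + N₃ ≤ 1) := by
  -- key facts from each hypothesis row
  have K : ∀ (i : Fin 6) (j : Fin 3),
      ((p:ℤ)^N₁ ∣ vecMul (fun t : Fin 3 => M i (Fin.natAdd 3 t))
          (Cmat α₁ α₂ α₃ (Fin.castAdd 3 j)) 0) ∧
      (vecMul (fun t : Fin 3 => M i (Fin.natAdd 3 t)) (Cmat α₁ α₂ α₃ (Fin.castAdd 3 j)) 0 = 0 →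
        (p:ℤ)^N₂ ∣ vecMul (fun t : Fin 3 => M i (Fin.natAdd 3 t))
          (Cmat α₁ α₂ α₃ (Fin.castAdd 3 j)) 1) ∧
      (vecMul (fun t : Fin 3 => M i (Fin.natAdd 3 t)) (Cmat α₁ α₂ α₃ (Fin.castAdd 3 j)) 0 = 0 →
        vecMul (fun t : Fin 3 => M i (Fin.natAdd 3 t)) (Cmat α₁ α₂ α₃ (Fin.castAdd 3 j)) 1 = 0 →
        (p:ℤ)^N₃ ∣ vecMul (fun t : Fin 3 => M i (Fin.natAdd 3 t))
          (Cmat α₁ α₂ α₃ (Fin.castAdd 3 j)) 2) := by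
    intro i j
    exact key p hp N₁ N₂ N₃ a b c _
      (fun k => by rw [Matrix.vecMul_vecMul]; exact (hdvd i).1 j k)
  have K' : ∀ (i : Fin 6) (j : Fin 3),
      ((p:ℤ)^N₁ ∣ vecMul (fun t : Fin 3 => M i (Fin.castAdd 3 t))
          (Cmat α₁ α₂ α₃ (Fin.natAdd 3 j)) 0) ∧
      (vecMul (fun t : Fin 3 => M i (Fin.castAdd 3 t)) (Cmat α₁ α₂ α₃ (Fin.natAdd 3 j)) 0 = 0 →
        (p:ℤ)^N₂ ∣ vecMul (fun t : Fin 3 => M i (Fin.castAdd 3 t))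
          (Cmat α₁ α₂ α₃ (Fin.natAdd 3 j)) 1) ∧
      (vecMul (fun t : Fin 3 => M i (Fin.castAdd 3 t)) (Cmat α₁ α₂ α₃ (Fin.natAdd 3 j)) 0 = 0 →
        vecMul (fun t : Fin 3 => M i (Fin.castAdd 3 t)) (Cmat α₁ α₂ α₃ (Fin.natAdd 3 j)) 1 = 0 →
        (p:ℤ)^N₃ ∣ vecMul (fun t : Fin 3 => M i (Fin.castAdd 3 t))
          (Cmat α₁ α₂ α₃ (Fin.natAdd 3 j)) 2) := by
    intro i j
    exact key p hp N₁ N₂ N₃ a b c _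
      (fun k => by rw [Matrix.vecMul_vecMul]; exact (hdvd i).2 j k)
  -- p^{N₁} divides every entry of M
  have hall : ∀ i : Fin 6, ((p:ℤ)^N₁ ∣ M i 0) ∧ ((p:ℤ)^N₁ ∣ M i 1) ∧ ((p:ℤ)^N₁ ∣ M i 2) ∧
      ((p:ℤ)^N₁ ∣ M i 3) ∧ ((p:ℤ)^N₁ ∣ M i 4) ∧ ((p:ℤ)^N₁ ∣ M i 5) := by
    intro i
    have a0 := (K' i 0).1; have a1 := (K' i 1).1; have a2 := (K' i 2).1
    have b0 := (K i 0).1; have b1 := (K i 1).1; have b2 := (K i 2).1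
    simp [Cmat, vecMul, dotProduct, Fin.sum_univ_three, Matrix.vecHead, Matrix.vecTail]
      at a0 a1 a2 b0 b1 b2
    refine ⟨a1, ?_, a2, b1, ?_, b2⟩
    · have := dvd_sub a0 (a1.mul_left α₁)
      rwa [show M i 0 * α₁ + M i 1 - α₁ * M i 0 = M i 1 from by ring] at this
    · have := dvd_sub b0 (b1.mul_left α₁)
      rwa [show M i 3 * α₁ + M i 4 - α₁ * M i 3 = M i 4 from by ring] at this
  have hN1 : ∀ i : Fin 6, N₁ ≤ d i := by
    intro i
    fin_cases i
    · exact le_of_pow_dvd hp ((hMdiag 0) ▸ (hall 0).1)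
    · exact le_of_pow_dvd hp ((hMdiag 1) ▸ (hall 1).2.1)
    · exact le_of_pow_dvd hp ((hMdiag 2) ▸ (hall 2).2.2.1)
    · exact le_of_pow_dvd hp ((hMdiag 3) ▸ (hall 3).2.2.2.1)
    · exact le_of_pow_dvd hp ((hMdiag 4) ▸ (hall 4).2.2.2.2.1)
    · exact le_of_pow_dvd hp ((hMdiag 5) ▸ (hall 5).2.2.2.2.2)
  -- N₂ ≤ d 2 : row 2, C(4)
  have hN2a : N₂ ≤ d 2 := by
    have h := (K' 2 0).2.1
    simp [Cmat, vecMul, dotProduct, Fin.sum_univ_three, Matrix.vecHead, Matrix.vecTail,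
      hMtri 2 0 (by decide), hMtri 2 1 (by decide)] at h
    exact le_of_pow_dvd hp ((hMdiag 2) ▸ h)
  -- N₂ ≤ d 5 : row 5, C(1)
  have hN2b : N₂ ≤ d 5 := by
    have h := (K 5 0).2.1
    simp [Cmat, vecMul, dotProduct, Fin.sum_univ_three, Matrix.vecHead, Matrix.vecTail,
      hMtri 5 3 (by decide), hMtri 5 4 (by decide)] at h
    exact le_of_pow_dvd hp ((hMdiag 5) ▸ h)
  -- N₃ ≤ d 1 : row 1, C(5)
  have hN3a : N₃ ≤ d 1 := by
    have h := (K' 1 1).2.2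
    simp [Cmat, vecMul, dotProduct, Fin.sum_univ_three, Matrix.vecHead, Matrix.vecTail,
      hMtri 1 0 (by decide)] at h
    exact le_of_pow_dvd hp ((hMdiag 1) ▸ h)
  -- N₃ ≤ d 4 : row 4, C(2)
  have hN3b : N₃ ≤ d 4 := by
    have h := (K 4 1).2.2
    simp [Cmat, vecMul, dotProduct, Fin.sum_univ_three, Matrix.vecHead, Matrix.vecTail,
      hMtri 4 3 (by decide)] at h
    exact le_of_pow_dvd hp ((hMdiag 4) ▸ h)
  refine ⟨hN1, hN2a, hN2b, hN3a, hN3b, fun hsum => ?_⟩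
  have h0 := hN1 0; have h1 := hN1 1; have h2 := hN1 2
  have h3 := hN1 3; have h4 := hN1 4; have h5 := hN1 5
  omega
end
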